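/- Let X be a random vector in ℝ^d with E[X] = 0 that is sub-exponential with parameters (ν², α) with ν, α > 0. Then for every t ≥ 0, ℙ[‖X‖_* ≥ t] ≤ 2·exp(−t²/(8ν²) + 2d) + 2·exp(−t/(4α) + 2d). -/

import Mathlib

open MeasureTheory ProbabilityTheory Matrix Real
open scoped ENNReal NNReal Pointwise

noncomputable section

/-- The Hilbert norm `‖x‖ = √⟨x, Qx⟩` induced by a positive definite matrix `Q`. -/
def qnorm {d : ℕ} (Q : Matrix (Fin d) (Fin d) ℝ) (x : Fin d → ℝ) : ℝ :=
  Real.sqrt (x ⬝ᵥ Q.mulVec x)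

/-- The dual norm `‖y‖_* = sup {⟨x, y⟩ : ‖x‖ ≤ 1}`. -/
def qdual {d : ℕ} (Q : Matrix (Fin d) (Fin d) ℝ) (y : Fin d → ℝ) : ℝ :=
  sSup {r : ℝ | ∃ x : Fin d → ℝ, qnorm Q x ≤ 1 ∧ r = x ⬝ᵥ y}

variable {d : ℕ} {Q : Matrix (Fin d) (Fin d) ℝ}

lemma qnorm_eq (hQ : Q.PosDef) (x : Fin d → ℝ) :
    qnorm Q x = @norm _ (Q.toNormedAddCommGroup hQ).toNorm x := by
  unfold qnorm; show Real.sqrt _ = Real.sqrt _; congr 1; exact dotProduct_comm _ _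

lemma qnorm_nonneg (x : Fin d → ℝ) : 0 ≤ qnorm Q x := Real.sqrt_nonneg _

lemma qnorm_zero : qnorm Q 0 = 0 := by simp [qnorm]

lemma qnorm_add_le (hQ : Q.PosDef) (x y : Fin d → ℝ) :
    qnorm Q (x + y) ≤ qnorm Q x + qnorm Q y := by
  simp only [qnorm_eq hQ]
  exact @norm_add_le _ (@SeminormedAddCommGroup.toSeminormedAddGroup _
    (@NormedAddCommGroup.toSeminormedAddCommGroup _ (Q.toNormedAddCommGroup hQ))) x y

lemma qnorm_smul (hQ : Q.PosDef) (c : ℝ) (x : Fin d → ℝ) :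
    qnorm Q (c • x) = |c| * qnorm Q x := by
  unfold qnorm
  have h : (c • x) ⬝ᵥ Q.mulVec (c • x) = c ^ 2 * (x ⬝ᵥ Q.mulVec x) := by
    simp only [Matrix.mulVec_smul, smul_dotProduct, dotProduct_smul, smul_eq_mul]
    ring
  rw [h, Real.sqrt_mul (sq_nonneg c), Real.sqrt_sq_eq_abs]

lemma qnorm_neg (hQ : Q.PosDef) (x : Fin d → ℝ) : qnorm Q (-x) = qnorm Q x := by
  have := qnorm_smul hQ (-1) x
  simpa using this

lemma qnorm_eq_zero (hQ : Q.PosDef) {x : Fin d → ℝ} (h : qnorm Q x = 0) : x = 0 := by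
  by_contra hx
  have hpos : 0 < x ⬝ᵥ Q.mulVec x := by
    have := hQ.re_dotProduct_pos (x := x) hx
    simpa using this
  rw [qnorm, Real.sqrt_eq_zero hpos.le] at h
  exact absurd h hpos.ne'

lemma qnorm_continuous (hQ : Q.PosDef) : Continuous (qnorm Q) := by
  unfold qnorm
  apply Real.continuous_sqrt.comp
  simp only [dotProduct, Matrix.mulVec]
  fun_prop

lemma qnorm_coercive (hd : 1 ≤ d) (hQ : Q.PosDef) :
    ∃ ε : ℝ, 0 < ε ∧ ∀ x : Fin d → ℝ, ε * ‖x‖ ≤ qnorm Q x := by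
  haveI : Nonempty (Fin d) := ⟨⟨0, hd⟩⟩
  have hsne : (Metric.sphere (0 : Fin d → ℝ) 1).Nonempty := by
    rw [NormedSpace.sphere_nonempty]; norm_num
  obtain ⟨x₀, hx₀S, hx₀min⟩ := (isCompact_sphere (0 : Fin d → ℝ) 1).exists_isMinOn hsne
    ((qnorm_continuous hQ).continuousOn)
  have hx₀ : ‖x₀‖ = 1 := by simpa using hx₀S
  have hx₀0 : x₀ ≠ 0 := by intro h; rw [h] at hx₀; simp at hx₀
  refine ⟨qnorm Q x₀, ?_, ?_⟩
  · rcases (qnorm_nonneg x₀).lt_or_eq with h | h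
    · exact h
    · exact absurd (qnorm_eq_zero hQ h.symm) hx₀0
  · intro x
    rcases eq_or_ne x 0 with rfl | hx
    · simp [qnorm_nonneg]
    · have hnx : 0 < ‖x‖ := norm_pos_iff.mpr hx
      have hu : (‖x‖⁻¹ • x) ∈ Metric.sphere (0 : Fin d → ℝ) 1 := by
        simp [norm_smul, abs_of_pos (inv_pos.mpr hnx), inv_mul_cancel₀ hnx.ne']
      have h2 := hx₀min hu
      simp only [Set.mem_setOf_eq] at h2
      rw [qnorm_smul hQ, abs_of_pos (inv_pos.mpr hnx)] at h2
      calc qnorm Q x₀ * ‖x‖ ≤ (‖x‖⁻¹ * qnorm Q x) * ‖x‖ :=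
            mul_le_mul_of_nonneg_right h2 hnx.le
        _ = qnorm Q x := by field_simp

lemma card_le_of_separated (hd : 1 ≤ d) (hQ : Q.PosDef) (s : Finset (Fin d → ℝ))
    (hs1 : ∀ z ∈ s, qnorm Q z ≤ 1)
    (hsep : ∀ z ∈ s, ∀ z' ∈ s, z ≠ z' → 1 / 2 < qnorm Q (z - z')) :
    s.card ≤ 5 ^ d := by
  classical
  set B : ℝ → Set (Fin d → ℝ) := fun r => {x | qnorm Q x ≤ r} with hB
  have hBmeas : ∀ r, MeasurableSet (B r) :=
    fun r => (isClosed_le (qnorm_continuous hQ) continuous_const).measurableSet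
  obtain ⟨ε, hε, hco⟩ := qnorm_coercive hd hQ
  have hfin : ∀ r, volume (B r) < ⊤ := by
    intro r
    have hsub : B r ⊆ Metric.closedBall 0 (r / ε) := by
      intro x hx
      rw [Metric.mem_closedBall, dist_zero_right]
      rw [le_div_iff₀ hε, mul_comm]
      exact le_trans (hco x) hx
    exact lt_of_le_of_lt (measure_mono hsub)
      (isCompact_closedBall (0 : Fin d → ℝ) (r / ε)).measure_lt_top
  have hpos : 0 < volume (B (1/4)) := by
    have hU : IsOpen {x : Fin d → ℝ | qnorm Q x < 1/4} :=
      isOpen_lt (qnorm_continuous hQ) continuous_const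
    have h0 : (0 : Fin d → ℝ) ∈ {x : Fin d → ℝ | qnorm Q x < 1/4} := by
      simp [qnorm_zero]
    have h1 : (0:ℝ≥0∞) < volume {x : Fin d → ℝ | qnorm Q x < 1/4} :=
      hU.measure_pos volume ⟨0, h0⟩
    refine lt_of_lt_of_le h1 (measure_mono fun x hx => (le_of_lt hx : qnorm Q x ≤ 1/4))
  have hscale : ∀ r : ℝ, 0 < r → volume (B r) = ENNReal.ofReal (r ^ d) * volume (B 1) := by
    intro r hr
    have hsm : B r = r • B 1 := by
      ext x
      rw [Set.mem_smul_set_iff_inv_smul_mem₀ hr.ne']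
      simp only [hB, Set.mem_setOf_eq]
      rw [qnorm_smul hQ, abs_of_pos (inv_pos.mpr hr)]
      rw [inv_mul_le_iff₀ hr, mul_one]
    rw [hsm, Measure.addHaar_smul_of_nonneg volume hr.le,
      Module.finrank_fintype_fun_eq_card, Fintype.card_fin]
  set f : (Fin d → ℝ) → Set (Fin d → ℝ) := fun z => {x | qnorm Q (x - z) ≤ 1/4} with hf
  have hfvol : ∀ z, volume (f z) = volume (B (1/4)) := by
    intro z
    have : f z = (· + (-z)) ⁻¹' (B (1/4)) := by
      ext x; simp [hf, hB, sub_eq_add_neg]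
    rw [this, measure_preimage_add_right]
  have hfmeas : ∀ z : Fin d → ℝ, MeasurableSet (f z) := by
    intro z
    exact (isClosed_le ((qnorm_continuous hQ).comp (by fun_prop)) continuous_const).measurableSet
  have hdisj : (s : Set (Fin d → ℝ)).PairwiseDisjoint f := by
    intro z hz z' hz' hne
    refine Set.disjoint_left.mpr fun x hx hx' => ?_
    have h1 : qnorm Q (z - z') ≤ 1/2 := by
      have : z - z' = (x - z') - (x - z) := by ring_nf
      rw [this]
      calc qnorm Q ((x - z') - (x - z)) = qnorm Q ((x - z') + -(x - z)) := by
            rw [sub_eq_add_neg]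
        _ ≤ qnorm Q (x - z') + qnorm Q (-(x - z)) := qnorm_add_le hQ _ _
        _ = qnorm Q (x - z') + qnorm Q (x - z) := by rw [qnorm_neg hQ]
        _ ≤ 1/4 + 1/4 := add_le_add hx' hx
        _ = 1/2 := by norm_num
    exact absurd h1 (not_le.mpr (hsep z hz z' hz' hne))
  have hcover : (⋃ z ∈ s, f z) ⊆ B (5/4) := by
    intro x hx
    simp only [Set.mem_iUnion] at hx
    obtain ⟨z, hz, hxz⟩ := hx
    have : qnorm Q x ≤ qnorm Q (x - z) + qnorm Q z := by
      calc qnorm Q x = qnorm Q ((x - z) + z) := by rw [sub_add_cancel]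
        _ ≤ _ := qnorm_add_le hQ _ _
    calc qnorm Q x ≤ qnorm Q (x - z) + qnorm Q z := this
      _ ≤ 1/4 + 1 := add_le_add hxz (hs1 z hz)
      _ ≤ 5/4 := by norm_num
  have hsum : (s.card : ℝ≥0∞) * volume (B (1/4)) ≤ volume (B (5/4)) := by
    have hb : volume (⋃ z ∈ s, f z) = ∑ z ∈ s, volume (f z) :=
      measure_biUnion_finset hdisj (fun z _ => hfmeas z)
    calc (s.card : ℝ≥0∞) * volume (B (1/4)) = ∑ z ∈ s, volume (f z) := by
          rw [Finset.sum_congr rfl (fun z _ => hfvol z), Finset.sum_const, nsmul_eq_mul]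
      _ = volume (⋃ z ∈ s, f z) := hb.symm
      _ ≤ volume (B (5/4)) := measure_mono hcover
  rw [hscale (1/4) (by norm_num), hscale (5/4) (by norm_num)] at hsum
  have hV0 : volume (B 1) ≠ 0 := by
    intro h
    rw [hscale (1/4) (by norm_num), h, mul_zero] at hpos
    exact lt_irrefl 0 hpos
  have hVt : volume (B 1) ≠ ⊤ := (hfin 1).ne
  rw [← mul_assoc] at hsum
  have hsum2 : (s.card : ℝ≥0∞) * ENNReal.ofReal ((1/4 : ℝ) ^ d) ≤ ENNReal.ofReal ((5/4 : ℝ) ^ d) :=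
    (ENNReal.mul_le_mul_iff_left hV0 hVt).mp hsum
  have h54 : ENNReal.ofReal ((5/4 : ℝ) ^ d) = (5^d : ℕ) * ENNReal.ofReal ((1/4 : ℝ) ^ d) := by
    rw [← ENNReal.ofReal_natCast, ← ENNReal.ofReal_mul (by positivity)]
    congr 1
    push_cast
    rw [← mul_pow]
    norm_num
  rw [h54] at hsum2
  have h14 : ENNReal.ofReal ((1/4 : ℝ) ^ d) ≠ 0 := by
    rw [Ne, ENNReal.ofReal_eq_zero, not_le]
    positivity
  have h14t : ENNReal.ofReal ((1/4 : ℝ) ^ d) ≠ ⊤ := ENNReal.ofReal_ne_top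
  have := (ENNReal.mul_le_mul_iff_left h14 h14t).mp hsum2
  exact_mod_cast this

lemma exists_net (hd : 1 ≤ d) (hQ : Q.PosDef) :
    ∃ s : Finset (Fin d → ℝ), (∀ z ∈ s, qnorm Q z ≤ 1) ∧ s.card ≤ 5 ^ d ∧
      ∀ x, qnorm Q x ≤ 1 → ∃ z ∈ s, qnorm Q (x - z) ≤ 1 / 2 := by
  classical
  set P : Finset (Fin d → ℝ) → Prop := fun s =>
    (∀ z ∈ s, qnorm Q z ≤ 1) ∧ ∀ z ∈ s, ∀ z' ∈ s, z ≠ z' → 1/2 < qnorm Q (z - z') with hP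
  set S : Set ℕ := {n | ∃ s, P s ∧ s.card = n} with hS
  have hS0 : 0 ∈ S := ⟨∅, ⟨by simp, by simp⟩, rfl⟩
  have hbdd : BddAbove S := by
    refine ⟨5 ^ d, fun n hn => ?_⟩
    obtain ⟨s, hs, rfl⟩ := hn
    exact card_le_of_separated hd hQ s hs.1 hs.2
  obtain ⟨s, hs, hcard⟩ := Nat.sSup_mem ⟨0, hS0⟩ hbdd
  refine ⟨s, hs.1, card_le_of_separated hd hQ s hs.1 hs.2, ?_⟩
  intro x hx
  by_contra hcon
  push_neg at hcon
  have hxs : x ∉ s := by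
    intro hmem
    have h1 := hcon x hmem
    rw [sub_self, qnorm_zero] at h1
    norm_num at h1
  have hP' : P (insert x s) := by
    constructor
    · intro z hz
      rcases Finset.mem_insert.mp hz with rfl | hz
      · exact hx
      · exact hs.1 z hz
    · intro z hz z' hz' hne
      rcases Finset.mem_insert.mp hz with rfl | hz₁ <;>
        rcases Finset.mem_insert.mp hz' with h | hz₂
      · exact absurd h.symm hne
      · exact hcon z' hz₂
      · subst h
        rw [show z - z' = -(z' - z) by ring, qnorm_neg hQ]
        exact hcon z hz₁
      · exact hs.2 z hz₁ z' hz₂ hne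
  have hmem2 : s.card + 1 ∈ S := by
    refine ⟨insert x s, hP', ?_⟩
    rw [Finset.card_insert_of_notMem hxs]
  have hle : s.card + 1 ≤ sSup S := le_csSup hbdd hmem2
  omega

lemma dual_set_facts (hd : 1 ≤ d) (hQ : Q.PosDef) (y : Fin d → ℝ) :
    (0 : ℝ) ∈ {r : ℝ | ∃ x : Fin d → ℝ, qnorm Q x ≤ 1 ∧ r = x ⬝ᵥ y} ∧
      BddAbove {r : ℝ | ∃ x : Fin d → ℝ, qnorm Q x ≤ 1 ∧ r = x ⬝ᵥ y} := by
  obtain ⟨ε, hε, hco⟩ := qnorm_coercive hd hQ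
  constructor
  · exact ⟨0, by simp [qnorm_zero]⟩
  · refine ⟨(1/ε) * ∑ i, |y i|, ?_⟩
    rintro r ⟨x, hx, rfl⟩
    have hxb : ‖x‖ ≤ 1/ε := by
      rw [le_div_iff₀ hε] at *
      calc ‖x‖ * ε = ε * ‖x‖ := mul_comm _ _
        _ ≤ qnorm Q x := hco x
        _ ≤ 1 := hx
    calc x ⬝ᵥ y ≤ |x ⬝ᵥ y| := le_abs_self _
      _ ≤ ∑ i, |x i * y i| := by
          rw [dotProduct]; exact Finset.abs_sum_le_sum_abs _ _
      _ ≤ ∑ i, (1/ε) * |y i| := by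
          refine Finset.sum_le_sum fun i _ => ?_
          rw [abs_mul]
          refine mul_le_mul_of_nonneg_right (le_trans ?_ hxb) (abs_nonneg _)
          calc |x i| = ‖x i‖ := (Real.norm_eq_abs _).symm
            _ ≤ ‖x‖ := norm_le_pi_norm x i
      _ = (1/ε) * ∑ i, |y i| := by rw [Finset.mul_sum]

lemma qdual_le_net (hd : 1 ≤ d) (hQ : Q.PosDef) (s : Finset (Fin d → ℝ)) (hne : s.Nonempty)
    (hcov : ∀ x, qnorm Q x ≤ 1 → ∃ z ∈ s, qnorm Q (x - z) ≤ 1 / 2) (y : Fin d → ℝ) :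
    qdual Q y ≤ 2 * s.sup' hne (fun z => z ⬝ᵥ y) := by
  obtain ⟨h0, hbdd⟩ := dual_set_facts hd hQ y
  unfold qdual
  set M := s.sup' hne (fun z => z ⬝ᵥ y) with hM
  set D := sSup {r : ℝ | ∃ x : Fin d → ℝ, qnorm Q x ≤ 1 ∧ r = x ⬝ᵥ y} with hD
  have key : ∀ r ∈ {r : ℝ | ∃ x : Fin d → ℝ, qnorm Q x ≤ 1 ∧ r = x ⬝ᵥ y},
      r ≤ M + D / 2 := by
    rintro r ⟨x, hx, rfl⟩
    obtain ⟨z, hz, hxz⟩ := hcov x hx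
    have h1 : x ⬝ᵥ y = z ⬝ᵥ y + (x - z) ⬝ᵥ y := by
      rw [sub_dotProduct]; ring
    have h2 : z ⬝ᵥ y ≤ M := Finset.le_sup' (fun w => w ⬝ᵥ y) hz
    have h3 : (x - z) ⬝ᵥ y ≤ D / 2 := by
      have hw : qnorm Q ((2 : ℝ) • (x - z)) ≤ 1 := by
        rw [qnorm_smul hQ]
        rw [show |(2:ℝ)| = 2 by norm_num]
        linarith
      have hmem : ((2 : ℝ) • (x - z)) ⬝ᵥ y ∈
          {r : ℝ | ∃ x : Fin d → ℝ, qnorm Q x ≤ 1 ∧ r = x ⬝ᵥ y} := ⟨_, hw, rfl⟩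
      have := le_csSup hbdd hmem
      rw [smul_dotProduct, smul_eq_mul] at this
      rw [le_div_iff₀ (by norm_num : (0:ℝ) < 2)]
      linarith [this]
    linarith
  have hfin : D ≤ M + D / 2 := csSup_le ⟨0, h0⟩ key
  show D ≤ 2 * M
  linarith

lemma qdual_chernoff {Ω : Type*} [MeasureSpace Ω] [IsProbabilityMeasure (ℙ : Measure Ω)]
    (X : Ω → Fin d → ℝ) (hXmeas : Measurable X) (ν α : ℝ) (hν : 0 < ν) (hα : 0 < α)
    (hsub : ∀ v : Fin d → ℝ, qnorm Q v = 1 → ∀ t : ℝ, |t| ≤ 1 / α →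
      ∫⁻ om : Ω, ENNReal.ofReal (Real.exp (t * (v ⬝ᵥ X om))) ∂(ℙ : Measure Ω)
        ≤ ENNReal.ofReal (Real.exp (t ^ 2 * ν ^ 2 / 2)))
    (u : Fin d → ℝ) (hu : qnorm Q u = 1) (l : ℝ) (hl0 : 0 < l) (hl : l ≤ 1 / α) (c : ℝ) :
    (ℙ : Measure Ω) {om | c ≤ u ⬝ᵥ X om}
      ≤ ENNReal.ofReal (Real.exp (l ^ 2 * ν ^ 2 / 2 - l * c)) := by
  have hudX : Measurable fun om => u ⬝ᵥ X om := by
    simp only [dotProduct]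
    exact Finset.measurable_sum _
      (fun i _ => measurable_const.mul ((measurable_pi_apply i).comp hXmeas))
  set f : Ω → ℝ≥0∞ := fun om => ENNReal.ofReal (Real.exp (l * (u ⬝ᵥ X om))) with hf
  have hfmeas : Measurable f :=
    ENNReal.measurable_ofReal.comp (Real.measurable_exp.comp (measurable_const.mul hudX))
  have hsubset : {om : Ω | c ≤ u ⬝ᵥ X om} ⊆ {om : Ω | ENNReal.ofReal (Real.exp (l * c)) ≤ f om} := by
    intro om hom
    exact ENNReal.ofReal_le_ofReal (Real.exp_le_exp.mpr (mul_le_mul_of_nonneg_left hom hl0.le))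
  have hmarkov := mul_meas_ge_le_lintegral₀ (μ := (ℙ : Measure Ω)) hfmeas.aemeasurable
    (ENNReal.ofReal (Real.exp (l * c)))
  have hmgf := hsub u hu l (by rw [abs_of_pos hl0]; exact hl)
  have hchain : ENNReal.ofReal (Real.exp (l * c)) * (ℙ : Measure Ω) {om | c ≤ u ⬝ᵥ X om}
      ≤ ENNReal.ofReal (Real.exp (l ^ 2 * ν ^ 2 / 2)) :=
    calc ENNReal.ofReal (Real.exp (l * c)) * (ℙ : Measure Ω) {om | c ≤ u ⬝ᵥ X om}
        ≤ ENNReal.ofReal (Real.exp (l * c)) *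
            (ℙ : Measure Ω) {om | ENNReal.ofReal (Real.exp (l * c)) ≤ f om} :=
          mul_le_mul_right (measure_mono hsubset) _
      _ ≤ ∫⁻ om, f om ∂(ℙ : Measure Ω) := hmarkov
      _ ≤ _ := hmgf
  have hne0 : ENNReal.ofReal (Real.exp (l * c)) ≠ 0 := by
    simp [ENNReal.ofReal_eq_zero, not_le, Real.exp_pos]
  have hnetop : ENNReal.ofReal (Real.exp (l * c)) ≠ ⊤ := ENNReal.ofReal_ne_top
  have hdiv : (ℙ : Measure Ω) {om | c ≤ u ⬝ᵥ X om}
      ≤ ENNReal.ofReal (Real.exp (l ^ 2 * ν ^ 2 / 2)) / ENNReal.ofReal (Real.exp (l * c)) := by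
    rw [ENNReal.le_div_iff_mul_le (Or.inl hne0) (Or.inl hnetop), mul_comm]
    exact hchain
  refine hdiv.trans (le_of_eq ?_)
  rw [Real.exp_sub, ENNReal.ofReal_div_of_pos (Real.exp_pos _)]

/-- Lemma `norm_subGaussian`: dual-norm tail bound for a
centered sub-exponential random vector. -/
theorem statement14
    {d : ℕ} (hd : 1 ≤ d)
    (Q : Matrix (Fin d) (Fin d) ℝ) (hQ : Q.PosDef)
    {Ω : Type*} [MeasureSpace Ω] [IsProbabilityMeasure (ℙ : Measure Ω)]
    (X : Ω → Fin d → ℝ) (hXmeas : Measurable X)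
    (hXint : Integrable X (ℙ : Measure Ω))
    (hXmean : ∫ om : Ω, X om ∂(ℙ : Measure Ω) = 0)
    (ν α : ℝ) (hν : 0 < ν) (hα : 0 < α)
    -- sub-exponential with parameters `(ν², α)`: for every `‖v‖ = 1` and `|t| ≤ 1/α`,
    -- `E[exp(t ⟨v, X⟩)] ≤ exp(t²ν²/2)`
    (hsub : ∀ v : Fin d → ℝ, qnorm Q v = 1 → ∀ t : ℝ, |t| ≤ 1 / α →
      ∫⁻ om : Ω, ENNReal.ofReal (Real.exp (t * (v ⬝ᵥ X om))) ∂(ℙ : Measure Ω)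
        ≤ ENNReal.ofReal (Real.exp (t ^ 2 * ν ^ 2 / 2))) :
    ∀ t : ℝ, 0 ≤ t →
      (ℙ : Measure Ω) {om : Ω | t ≤ qdual Q (X om)}
        ≤ ENNReal.ofReal
            (2 * Real.exp (-(t ^ 2) / (8 * ν ^ 2) + 2 * d)
              + 2 * Real.exp (-t / (4 * α) + 2 * d)) := by
  intro t ht
  rcases eq_or_lt_of_le ht with rfl | htpos
  · -- t = 0: the bound is at least 1
    have h1 : (ℙ : Measure Ω) {om : Ω | (0:ℝ) ≤ qdual Q (X om)} ≤ 1 := prob_le_one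
    refine h1.trans ?_
    rw [← ENNReal.ofReal_one]
    apply ENNReal.ofReal_le_ofReal
    have hA : (1:ℝ) ≤ Real.exp (-((0:ℝ) ^ 2) / (8 * ν ^ 2) + 2 * d) := by
      rw [Real.one_le_exp_iff]
      positivity
    nlinarith [Real.exp_pos (-(0:ℝ) / (4 * α) + 2 * d)]
  · obtain ⟨s, hs1, hscard, hcov⟩ := exists_net hd hQ
    have hne : s.Nonempty := by
      obtain ⟨z, hz, _⟩ := hcov 0 (by rw [qnorm_zero]; norm_num)
      exact ⟨z, hz⟩
    have hincl : {om : Ω | t ≤ qdual Q (X om)} ⊆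
        ⋃ z ∈ s, {om : Ω | t/2 ≤ z ⬝ᵥ X om} := by
      intro om hom
      have h1 : t ≤ 2 * s.sup' hne (fun z => z ⬝ᵥ X om) :=
        le_trans hom (qdual_le_net hd hQ s hne hcov (X om))
      obtain ⟨z, hz, hzeq⟩ := Finset.exists_mem_eq_sup' hne (fun z => z ⬝ᵥ X om)
      refine Set.mem_biUnion hz ?_
      simp only [Set.mem_setOf_eq]
      rw [← hzeq]
      linarith
    have hzbound : ∀ l : ℝ, 0 < l → l ≤ 1/α → ∀ z ∈ s,
        (ℙ : Measure Ω) {om : Ω | t/2 ≤ z ⬝ᵥ X om}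
          ≤ ENNReal.ofReal (Real.exp (l ^ 2 * ν ^ 2 / 2 - l * (t/2))) := by
      intro l hl0 hl z hz
      rcases eq_or_ne z 0 with rfl | hz0
      · have hempty : {om : Ω | t/2 ≤ (0 : Fin d → ℝ) ⬝ᵥ X om} = ∅ := by
          ext om
          simp only [Set.mem_setOf_eq, zero_dotProduct, Set.mem_empty_iff_false, iff_false,
            not_le]
          linarith
        rw [hempty, measure_empty]
        exact zero_le
      · have hq0 : 0 < qnorm Q z :=
          lt_of_le_of_ne (qnorm_nonneg z) (fun h => hz0 (qnorm_eq_zero hQ h.symm))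
        have hq1 : qnorm Q z ≤ 1 := hs1 z hz
        set u : Fin d → ℝ := (qnorm Q z)⁻¹ • z with hu_def
        have hu : qnorm Q u = 1 := by
          rw [hu_def, qnorm_smul hQ, abs_of_pos (inv_pos.mpr hq0)]
          field_simp
        have hsub2 : {om : Ω | t/2 ≤ z ⬝ᵥ X om} ⊆ {om : Ω | t/2 ≤ u ⬝ᵥ X om} := by
          intro om hom
          simp only [Set.mem_setOf_eq] at hom ⊢
          have hzx : 0 ≤ z ⬝ᵥ X om := le_trans (by positivity) hom
          have hud : u ⬝ᵥ X om = (qnorm Q z)⁻¹ * (z ⬝ᵥ X om) := by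
            rw [hu_def, smul_dotProduct, smul_eq_mul]
          have hinv : (1:ℝ) ≤ (qnorm Q z)⁻¹ := (one_le_inv₀ hq0).mpr hq1
          rw [hud]
          calc t/2 ≤ z ⬝ᵥ X om := hom
            _ = 1 * (z ⬝ᵥ X om) := (one_mul _).symm
            _ ≤ (qnorm Q z)⁻¹ * (z ⬝ᵥ X om) := mul_le_mul_of_nonneg_right hinv hzx
        exact le_trans (measure_mono hsub2)
          (qdual_chernoff X hXmeas ν α hν hα hsub u hu l hl0 hl (t/2))
    have h5exp : ((5:ℝ) ^ d) ≤ Real.exp (2 * d) := by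
      have h5 : (5:ℝ) ≤ Real.exp 2 := by
        have he : (2.7182818283 : ℝ) < Real.exp 1 := Real.exp_one_gt_d9
        have h2 : Real.exp 2 = Real.exp 1 * Real.exp 1 := by
          rw [← Real.exp_add]; norm_num
        nlinarith
      have : Real.exp (2 * (d:ℝ)) = Real.exp 2 ^ d := by
        rw [mul_comm, Real.exp_nat_mul]
      rw [this]
      exact pow_le_pow_left₀ (by norm_num) h5 d
    have htotal : ∀ l : ℝ, 0 < l → l ≤ 1/α →
        (ℙ : Measure Ω) {om : Ω | t ≤ qdual Q (X om)}
          ≤ ENNReal.ofReal (Real.exp (2 * d + (l ^ 2 * ν ^ 2 / 2 - l * (t/2)))) := by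
      intro l hl0 hl
      calc (ℙ : Measure Ω) {om : Ω | t ≤ qdual Q (X om)}
          ≤ (ℙ : Measure Ω) (⋃ z ∈ s, {om : Ω | t/2 ≤ z ⬝ᵥ X om}) := measure_mono hincl
        _ ≤ ∑ z ∈ s, (ℙ : Measure Ω) {om : Ω | t/2 ≤ z ⬝ᵥ X om} :=
            measure_biUnion_finset_le s _
        _ ≤ ∑ _z ∈ s, ENNReal.ofReal (Real.exp (l ^ 2 * ν ^ 2 / 2 - l * (t/2))) :=
            Finset.sum_le_sum (fun z hz => hzbound l hl0 hl z hz)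
        _ = (s.card : ℝ≥0∞) * ENNReal.ofReal (Real.exp (l ^ 2 * ν ^ 2 / 2 - l * (t/2))) := by
            rw [Finset.sum_const, nsmul_eq_mul]
        _ ≤ ENNReal.ofReal ((5:ℝ) ^ d) *
              ENNReal.ofReal (Real.exp (l ^ 2 * ν ^ 2 / 2 - l * (t/2))) := by
            apply mul_le_mul_left
            rw [← ENNReal.ofReal_natCast]
            apply ENNReal.ofReal_le_ofReal
            calc (s.card : ℝ) ≤ ((5^d : ℕ) : ℝ) := by exact_mod_cast hscard
              _ = (5:ℝ)^d := by push_cast; ring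
        _ ≤ ENNReal.ofReal (Real.exp (2 * d)) *
              ENNReal.ofReal (Real.exp (l ^ 2 * ν ^ 2 / 2 - l * (t/2))) :=
            mul_le_mul_left (ENNReal.ofReal_le_ofReal h5exp) _
        _ = ENNReal.ofReal (Real.exp (2 * d + (l ^ 2 * ν ^ 2 / 2 - l * (t/2)))) := by
            rw [← ENNReal.ofReal_mul (Real.exp_nonneg _), ← Real.exp_add]
    rcases le_or_gt (t / (2 * ν ^ 2)) (1/α) with hcase | hcase
    · have h := htotal (t / (2 * ν ^ 2)) (by positivity) hcase
      refine h.trans (ENNReal.ofReal_le_ofReal ?_)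
      have hAeq : 2 * (d:ℝ) + ((t / (2 * ν ^ 2)) ^ 2 * ν ^ 2 / 2 - (t / (2 * ν ^ 2)) * (t/2))
          = -(t ^ 2) / (8 * ν ^ 2) + 2 * d := by
        field_simp
        ring
      rw [hAeq]
      nlinarith [Real.exp_pos (-(t ^ 2) / (8 * ν ^ 2) + 2 * (d:ℝ)),
        Real.exp_pos (-t / (4 * α) + 2 * (d:ℝ))]
    · have h := htotal (1/α) (by positivity) le_rfl
      refine h.trans (ENNReal.ofReal_le_ofReal ?_)
      have hcase' : 1 * (2 * ν ^ 2) < t * α :=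
        (div_lt_div_iff₀ hα (by positivity)).mp hcase
      have hkey : 2 * (d:ℝ) + ((1/α) ^ 2 * ν ^ 2 / 2 - (1/α) * (t/2))
          ≤ -t / (4 * α) + 2 * d := by
        rw [← sub_nonneg]
        have e : (-t / (4 * α) + 2 * (d:ℝ))
            - (2 * (d:ℝ) + ((1/α) ^ 2 * ν ^ 2 / 2 - (1/α) * (t/2)))
            = (t * α - 2 * ν ^ 2) / (4 * α ^ 2) := by
          field_simp
          ring
        rw [e]
        apply div_nonneg (by linarith) (by positivity)
      calc Real.exp (2 * (d:ℝ) + ((1/α) ^ 2 * ν ^ 2 / 2 - (1/α) * (t/2)))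
          ≤ Real.exp (-t / (4 * α) + 2 * d) := Real.exp_le_exp.mpr hkey
        _ ≤ _ := by
            nlinarith [Real.exp_pos (-(t ^ 2) / (8 * ν ^ 2) + 2 * (d:ℝ)),
              Real.exp_pos (-t / (4 * α) + 2 * (d:ℝ))]

end
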